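/- Let 𝒳 and 𝒴 have |𝒳| ≥ 2 and |𝒴| ≥ 2, let Q be a positive joint distribution on 𝒳 × 𝒴, let n ≥ 1, set ν_n = 4(|𝒳|−1)(|𝒴|−1)/n and Δ_n = ν_n·log(|𝒳||𝒴|/ν_n) + ν_n·max_{x,y} log(1/Q(x,y)), and assume ν_n ≤ 1/2. Then for every joint type P̄ ∈ 𝒫_n(𝒳 × 𝒴): E_n(P̄‖Q) ≤ E(P̄‖Q) + Δ_n, where E_n(P̄‖Q) = min{ D(P̃‖Q) : P̃ ∈ 𝒫_n(𝒳 × 𝒴), P̃_X = P̄_X, P̃_Y = P̄_Y }. -/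

import Mathlib

open scoped Classical BigOperators

noncomputable section

variable {X Y : Type*} [Fintype X] [Fintype Y]

/-- `P` is a joint distribution on `X × Y`. -/
def IsDist (P : X × Y → ℝ) : Prop :=
  (∀ z, 0 ≤ P z) ∧ ∑ z : X × Y, P z = 1

/-- `P` is a positive joint distribution on `X × Y`. -/
def IsPos (P : X × Y → ℝ) : Prop :=
  (∀ z, 0 < P z) ∧ ∑ z : X × Y, P z = 1

/-- The first marginal of a joint distribution. -/
def margX (P : X × Y → ℝ) (x : X) : ℝ := ∑ y : Y, P (x, y)

/-- The second marginal of a joint distribution. -/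
def margY (P : X × Y → ℝ) (y : Y) : ℝ := ∑ x : X, P (x, y)

/-- Relative entropy `D(P‖Q)` (natural log; `Real.log 0 = 0` realizes `0·log 0 = 0`). -/
def relEnt (P Q : X × Y → ℝ) : ℝ := ∑ z : X × Y, P z * Real.log (P z / Q z)

/-- Projected relative entropy `E(P‖Q)`. -/
def projE (P Q : X × Y → ℝ) : ℝ :=
  sInf { d : ℝ | ∃ P' : X × Y → ℝ,
    IsDist P' ∧ margX P' = margX P ∧ margY P' = margY P ∧ d = relEnt P' Q }

/-- `R ∈ ℰ^{xy}(S)` : `R` has the same correlation coordinates as `S`. -/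
def SameCorr (R S : X × Y → ℝ) : Prop :=
  ∃ a1 : X → ℝ, ∃ a2 : Y → ℝ,
    ∀ x : X, ∀ y : Y, Real.log (R (x, y) / S (x, y)) = a1 x + a2 y

/-- The type (empirical distribution) of a sequence. -/
def empDist {n : ℕ} (x : Fin n → X) (a : X) : ℝ :=
  ((Finset.univ.filter fun i => x i = a).card : ℝ) / n

/-- The joint type of a pair of sequences. -/
def empJoint {n : ℕ} (x : Fin n → X) (y : Fin n → Y) (z : X × Y) : ℝ :=
  ((Finset.univ.filter fun i => x i = z.1 ∧ y i = z.2).card : ℝ) / n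

/-- Probability of a set under the `n`-fold i.i.d. product of `P`. -/
def prodProb (P : X × Y → ℝ) (n : ℕ) (A : Set ((Fin n → X) × (Fin n → Y))) : ℝ :=
  ∑ z : (Fin n → X) × (Fin n → Y),
    if z ∈ A then ∏ i : Fin n, P (z.1 i, z.2 i) else 0

/-- `P` is a joint type with denominator `n` (an element of `𝒫ₙ(𝒳 × 𝒴)`). -/
def IsTypeN (n : ℕ) (P : X × Y → ℝ) : Prop :=
  IsDist P ∧ ∀ z : X × Y, ∃ k : ℕ, P z = (k : ℝ) / n

/-- `Eₙ(P̄‖Q)` : projected relative entropy restricted to joint types. -/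
def En (n : ℕ) (Pbar Q : X × Y → ℝ) : ℝ :=
  sInf { d : ℝ | ∃ Pt : X × Y → ℝ,
    IsTypeN n Pt ∧ margX Pt = margX Pbar ∧ margY Pt = margY Pbar ∧ d = relEnt Pt Q }

/-- Standard normal cumulative distribution function `Φ`. -/
def stdNormalCDF (t : ℝ) : ℝ :=
  ∫ u in Set.Iic t, (Real.sqrt (2 * Real.pi))⁻¹ * Real.exp (-(u ^ 2) / 2)

/-- Inverse of the standard normal CDF, `Φ⁻¹`. -/
def stdNormalCDFInv (e : ℝ) : ℝ := Function.invFun stdNormalCDF e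

/-!
Given any `P'` with the marginals of the joint type `P̄`, the matrix `n P'` has integral row and
column sums, namely those of `n P̄`. Such a matrix can be rounded entrywise, up or down, to an
integer matrix with the same row and column sums: every fractional entry has another fractional
entry in its row and in its column, so the fractional entries outnumber the independent margin
constraints on them, and a nonzero margin-preserving perturbation supported on them exists;
moving along it until an entry becomes an integer lowers the number of fractional entries.
Dividing by `n` gives a joint type `P̃` with the marginals of `P̄` and `|P̃ - P'| ≤ 1/n`
entrywise, so `‖P̃ - P'‖₁ ≤ |𝒳||𝒴|/n ≤ νₙ`. Then `D(P̃‖Q) - D(P'‖Q)` splits into an entropy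
difference, at most `νₙ log(|𝒳||𝒴|/νₙ)` by the continuity bound `η q - η p ≤ η |p - q|` for
`η x = -x log x` and concavity of `η`, and a cross-entropy difference, at most
`νₙ max log(1/Q)`.
-/

open Finset Real

theorem exists_ne_apply_notMem_of_sum_mem {ι M : Type*} [Fintype ι] [AddCommGroup M]
    (S : AddSubgroup M) {f : ι → M} (hsum : ∑ i, f i ∈ S) {i : ι} (hi : f i ∉ S) :
    ∃ j ≠ i, f j ∉ S := by
  by_contra! h
  refine hi ?_
  rw [← add_sub_cancel_right (f i) (∑ j ∈ univ.erase i, f j), add_sum_erase _ _ (mem_univ i)]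
  exact sub_mem hsum (sum_mem fun j hj => h j (ne_of_mem_erase hj))

theorem two_mul_card_image_le {α β : Type*} [DecidableEq β] {s : Finset α} (f : α → β)
    (h : ∀ a ∈ s, ∃ b ∈ s, b ≠ a ∧ f b = f a) : 2 * #(s.image f) ≤ #s := by
  calc 2 * #(s.image f) = ∑ _b ∈ s.image f, 2 := by rw [sum_const, smul_eq_mul, mul_comm]
    _ ≤ ∑ b ∈ s.image f, #{a ∈ s | f a = b} := by
      refine sum_le_sum fun b hb => ?_
      obtain ⟨a, ha, rfl⟩ := mem_image.mp hb
      obtain ⟨a', ha', hne, hfa'⟩ := h a ha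
      exact one_lt_card.mpr ⟨a, by simp [ha], a', by simp [ha', hfa'], hne.symm⟩
    _ = #s := (card_eq_sum_card_image f s).symm

open Module in
theorem exists_ne_zero_supported_margins_eq_zero {F : Finset (X × Y)} (hF : F.Nonempty)
    (hrow : ∀ z ∈ F, ∃ w ∈ F, w ≠ z ∧ w.1 = z.1) (hcol : ∀ z ∈ F, ∃ w ∈ F, w ≠ z ∧ w.2 = z.2) :
    ∃ c : X × Y → ℝ, c ≠ 0 ∧ (∀ z ∉ F, c z = 0) ∧
      (∀ x, ∑ y, c (x, y) = 0) ∧ ∀ y, ∑ x, c (x, y) = 0 := by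
  obtain ⟨z₀, hz₀⟩ := hF
  -- The column constraint at `z₀.2` follows from the others, so it is left out of the count.
  let L : (X × Y → ℝ) →ₗ[ℝ]
      ((Fᶜ : Finset (X × Y)) → ℝ) × (F.image Prod.fst → ℝ) × ((F.image Prod.snd).erase z₀.2 → ℝ) :=
    { toFun := fun c => (fun z => c z, fun x => ∑ y, c (x.1, y), fun y => ∑ x, c (x, y.1))
      map_add' := fun c d => by ext <;> simp [sum_add_distrib]
      map_smul' := fun r c => by ext <;> simp [mul_sum] }
  have hker : LinearMap.ker L ≠ ⊥ := LinearMap.ker_ne_bot_of_finrank_lt <| by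
    simp only [finrank_prod, finrank_fintype_fun_eq_card, Fintype.card_coe, card_compl]
    have := two_mul_card_image_le Prod.fst hrow
    have := two_mul_card_image_le Prod.snd hcol
    have := card_erase_of_mem (mem_image_of_mem Prod.snd hz₀)
    have := card_le_univ F
    have := card_pos.mpr ⟨z₀, hz₀⟩
    omega
  obtain ⟨c, hc, hc0⟩ := Submodule.exists_mem_ne_zero_of_ne_bot hker
  obtain ⟨hLF, hLX, hLY⟩ : (fun z : (Fᶜ : Finset (X × Y)) => c z) = 0 ∧
      (fun x : F.image Prod.fst => ∑ y, c (x.1, y)) = 0 ∧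
      (fun y : (F.image Prod.snd).erase z₀.2 => ∑ x, c (x, y.1)) = 0 := by
    have hLc := LinearMap.mem_ker.mp hc
    simp only [L, LinearMap.coe_mk, AddHom.coe_mk, Prod.mk_eq_zero] at hLc
    exact hLc
  have hoff : ∀ z ∉ F, c z = 0 := fun z hz => congrFun hLF ⟨z, mem_compl.mpr hz⟩
  have hrow0 : ∀ x, ∑ y, c (x, y) = 0 := by
    intro x
    by_cases hx : x ∈ F.image Prod.fst
    · exact congrFun hLX ⟨x, hx⟩
    · exact sum_eq_zero fun y _ => hoff _ fun h => hx (mem_image_of_mem Prod.fst h)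
  have hcol0 : ∀ y ≠ z₀.2, ∑ x, c (x, y) = 0 := by
    intro y hy
    by_cases hy' : y ∈ F.image Prod.snd
    · exact congrFun hLY ⟨y, mem_erase.mpr ⟨hy, hy'⟩⟩
    · exact sum_eq_zero fun x _ => hoff _ fun h => hy' (mem_image_of_mem Prod.snd h)
  refine ⟨c, hc0, hoff, hrow0, fun y => ?_⟩
  by_cases hy : y = z₀.2
  · have htot : ∑ y, ∑ x, c (x, y) = 0 := by
      rw [sum_comm]; exact sum_eq_zero fun x _ => hrow0 x
    rwa [Fintype.sum_eq_single z₀.2 hcol0, ← hy] at htot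
  · exact hcol0 y hy

theorem exists_add_mul_mem_Icc_hits_endpoint {ι : Type*} [Fintype ι] {a lo hi c : ι → ℝ}
    (hc : c ≠ 0) (h : ∀ i, c i ≠ 0 → lo i < a i ∧ a i < hi i) :
    ∃ t : ℝ, (∀ i, c i ≠ 0 → lo i ≤ a i + t * c i ∧ a i + t * c i ≤ hi i) ∧
      ∃ i, c i ≠ 0 ∧ (a i + t * c i = lo i ∨ a i + t * c i = hi i) := by
  have hs : ({i | c i ≠ 0} : Finset ι).Nonempty := by
    obtain ⟨i, hi⟩ := Function.ne_iff.mp hc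
    exact ⟨i, by simpa using hi⟩
  -- `r i` is the step after which coordinate `i` leaves its interval.
  let r : ι → ℝ := fun i => if 0 < c i then (hi i - a i) / c i else (lo i - a i) / c i
  have hr : ∀ i, c i ≠ 0 → 0 < r i := by
    intro i hci
    rcases hci.lt_or_gt with hneg | hpos
    · simpa [r, hneg.not_gt] using div_pos_of_neg_of_neg (sub_neg.mpr (h i hci).1) hneg
    · simpa [r, hpos] using div_pos (sub_pos.mpr (h i hci).2) hpos
  obtain ⟨i₀, hi₀, hti₀⟩ := exists_mem_eq_inf' hs r
  set t := ({i | c i ≠ 0} : Finset ι).inf' hs r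
  have ht : 0 < t := (lt_inf'_iff hs).mpr fun i hi => hr i (by simpa using hi)
  refine ⟨t, fun i hci => ?_, i₀, by simpa using hi₀, ?_⟩
  · have hti : t ≤ r i := inf'_le _ (by simpa using hci)
    have := h i hci
    rcases Ne.lt_or_gt hci with hneg | hpos
    · simp only [r, hneg.not_gt, if_false] at hti
      rw [le_div_iff_of_neg hneg] at hti
      exact ⟨by linarith, by nlinarith⟩
    · simp only [r, hpos, if_true] at hti
      rw [le_div_iff₀ hpos] at hti
      exact ⟨by nlinarith, by linarith⟩
  · have hci₀ : c i₀ ≠ 0 := by simpa using hi₀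
    rw [hti₀]
    by_cases hpos : 0 < c i₀ <;> simp [r, hpos, div_mul_cancel₀ _ hci₀]

section Rounding

open AddSubgroup

def nonIntEntries {ι : Type*} [Fintype ι] (A : ι → ℝ) : Finset ι := {i | A i ∉ zmultiples 1}

theorem exists_margins_eq_card_nonIntEntries_lt (lo hi : X × Y → ℤ) {A : X × Y → ℝ}
    (hrow : ∀ x, ∑ y, A (x, y) ∈ zmultiples 1) (hcol : ∀ y, ∑ x, A (x, y) ∈ zmultiples 1)
    (hbox : ∀ z, (lo z : ℝ) ≤ A z ∧ A z ≤ hi z) (hA : (nonIntEntries A).Nonempty) :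
    ∃ A' : X × Y → ℝ, (∀ x, ∑ y, A' (x, y) = ∑ y, A (x, y)) ∧
      (∀ y, ∑ x, A' (x, y) = ∑ x, A (x, y)) ∧ (∀ z, (lo z : ℝ) ≤ A' z ∧ A' z ≤ hi z) ∧
      #(nonIntEntries A') < #(nonIntEntries A) := by
  have hmem : ∀ {B : X × Y → ℝ} {z}, z ∈ nonIntEntries B ↔ B z ∉ zmultiples 1 := by
    simp [nonIntEntries]
  obtain ⟨c, hc0, hoff, hcrow, hccol⟩ := exists_ne_zero_supported_margins_eq_zero hA
    (fun ⟨x, y⟩ hz => by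
      obtain ⟨y', hy', hA'⟩ := exists_ne_apply_notMem_of_sum_mem _ (hrow x) (hmem.mp hz)
      exact ⟨(x, y'), hmem.mpr hA', by simp [hy'], rfl⟩)
    (fun ⟨x, y⟩ hz => by
      obtain ⟨x', hx', hA'⟩ := exists_ne_apply_notMem_of_sum_mem _ (hcol y) (hmem.mp hz)
      exact ⟨(x', y), hmem.mpr hA', by simp [hx'], rfl⟩)
  have hsupp : ∀ z, c z ≠ 0 → A z ∉ zmultiples 1 := fun z hz =>
    hmem.mp (by_contra fun h => hz (hoff z h))
  have hstrict : ∀ z, c z ≠ 0 → (lo z : ℝ) < A z ∧ A z < hi z := fun z hz =>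
    ⟨(hbox z).1.lt_of_ne fun h => hsupp z hz (h ▸ intCast_mem_zmultiples_one _),
      (hbox z).2.lt_of_ne fun h => hsupp z hz (h ▸ intCast_mem_zmultiples_one _)⟩
  obtain ⟨t, ht, z₁, hcz₁, hz₁⟩ := exists_add_mul_mem_Icc_hits_endpoint hc0 hstrict
  refine ⟨fun z => A z + t * c z, fun x => ?_, fun y => ?_, fun z => ?_, ?_⟩
  · simp [sum_add_distrib, ← mul_sum, hcrow]
  · simp [sum_add_distrib, ← mul_sum, hccol]
  · by_cases hcz : c z = 0
    · simpa [hcz] using hbox z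
    · exact ht z hcz
  · have hsub : nonIntEntries (fun z => A z + t * c z) ⊆ (nonIntEntries A).erase z₁ := by
      intro z hz
      have hz' := hmem.mp hz
      refine mem_erase.mpr ⟨?_, ?_⟩
      · rintro rfl
        rcases hz₁ with h | h <;> exact hz' (h ▸ intCast_mem_zmultiples_one _)
      · by_cases hcz : c z = 0
        · simpa [hmem, hcz] using hz'
        · exact hmem.mpr (hsupp z hcz)
    exact (card_le_card hsub).trans_lt (card_erase_lt_of_mem (hmem.mpr (hsupp z₁ hcz₁)))

theorem exists_int_margins_eq_of_mem_box (lo hi : X × Y → ℤ) (A : X × Y → ℝ)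
    (hrow : ∀ x, ∑ y, A (x, y) ∈ zmultiples 1) (hcol : ∀ y, ∑ x, A (x, y) ∈ zmultiples 1)
    (hbox : ∀ z, (lo z : ℝ) ≤ A z ∧ A z ≤ hi z) :
    ∃ B : X × Y → ℤ, (∀ x, ∑ y, (B (x, y) : ℝ) = ∑ y, A (x, y)) ∧
      (∀ y, ∑ x, (B (x, y) : ℝ) = ∑ x, A (x, y)) ∧ ∀ z, lo z ≤ B z ∧ B z ≤ hi z := by
  induction hm : #(nonIntEntries A) using Nat.strong_induction_on generalizing A with
  | _ m ih =>
    rcases (nonIntEntries A).eq_empty_or_nonempty with hA | hA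
    · have hint : ∀ z, ∃ k : ℤ, (k : ℝ) = A z := fun z => by
        simpa [nonIntEntries, mem_zmultiples_iff] using (eq_empty_iff_forall_notMem.mp hA) z
      choose B hB using hint
      exact ⟨B, by simp [hB], by simp [hB], fun z => by
        have := hbox z; rw [← hB z] at this; exact_mod_cast this⟩
    · obtain ⟨A', hrow', hcol', hbox', hlt⟩ :=
        exists_margins_eq_card_nonIntEntries_lt lo hi hrow hcol hbox hA
      obtain ⟨B, hBrow, hBcol, hB⟩ := ih _ (hm ▸ hlt) A' (fun x => hrow' x ▸ hrow x)
        (fun y => hcol' y ▸ hcol y) hbox' rfl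
      exact ⟨B, fun x => (hBrow x).trans (hrow' x), fun y => (hBcol y).trans (hcol' y), hB⟩

end Rounding

theorem sum_eq_sum_margX (P : X × Y → ℝ) : ∑ z, P z = ∑ x, margX P x :=
  Fintype.sum_prod_type P

theorem IsTypeN.nat_mul_mem_zmultiples {n : ℕ} {P : X × Y → ℝ} (hP : IsTypeN n P) (hn : 0 < n)
    (z : X × Y) : (n : ℝ) * P z ∈ AddSubgroup.zmultiples 1 := by
  obtain ⟨k, hk⟩ := hP.2 z
  rw [hk, mul_div_cancel₀ _ (by positivity)]
  exact_mod_cast AddSubgroup.intCast_mem_zmultiples_one (k : ℤ)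

theorem exists_isTypeN_margins_eq_abs_sub_le {n : ℕ} (hn : 0 < n) {P Pbar : X × Y → ℝ}
    (hP : ∀ z, 0 ≤ P z) (hPbar : IsTypeN n Pbar)
    (hPX : margX P = margX Pbar) (hPY : margY P = margY Pbar) :
    ∃ Pt, IsTypeN n Pt ∧ margX Pt = margX Pbar ∧ margY Pt = margY Pbar ∧
      ∀ z, |Pt z - P z| ≤ 1 / n := by
  have hn' : (0 : ℝ) < n := by exact_mod_cast hn
  obtain ⟨B, hBX, hBY, hB⟩ := exists_int_margins_eq_of_mem_box (fun z => ⌊n * P z⌋)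
    (fun z => ⌈n * P z⌉) (fun z => n * P z)
    (fun x => by
      rw [← mul_sum, ← margX, hPX, margX, mul_sum]
      exact sum_mem fun y _ => hPbar.nat_mul_mem_zmultiples hn (x, y))
    (fun y => by
      rw [← mul_sum, ← margY, hPY, margY, mul_sum]
      exact sum_mem fun x _ => hPbar.nat_mul_mem_zmultiples hn (x, y))
    (fun z => ⟨Int.floor_le _, Int.le_ceil _⟩)
  have hB0 : ∀ z, 0 ≤ B z := fun z =>
    (Int.floor_nonneg.mpr (mul_nonneg hn'.le (hP z))).trans (hB z).1
  have hPtX : margX (fun z => (B z : ℝ) / n) = margX Pbar := by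
    ext x
    rw [← hPX, margX, margX, ← sum_div, hBX, ← mul_sum, mul_div_cancel_left₀ _ hn'.ne']
  have hPtY : margY (fun z => (B z : ℝ) / n) = margY Pbar := by
    ext y
    rw [← hPY, margY, margY, ← sum_div, hBY, ← mul_sum, mul_div_cancel_left₀ _ hn'.ne']
  have hnat : ∀ z, ∃ k : ℕ, (B z : ℝ) / n = k / n := fun z =>
    ⟨(B z).toNat, by congr 1; exact_mod_cast (Int.toNat_of_nonneg (hB0 z)).symm⟩
  refine ⟨fun z => (B z : ℝ) / n, ⟨⟨fun z => div_nonneg (by exact_mod_cast hB0 z) hn'.le, ?_⟩,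
    hnat⟩, hPtX, hPtY, fun z => ?_⟩
  · rw [sum_eq_sum_margX, hPtX, ← sum_eq_sum_margX, hPbar.1.2]
  · have h1 : (n : ℝ) * P z - 1 < B z :=
      (Int.sub_one_lt_floor _).trans_le (by exact_mod_cast (hB z).1)
    have h2 : (B z : ℝ) < n * P z + 1 :=
      (Int.cast_le.mpr (hB z).2).trans_lt (Int.ceil_lt_add_one _)
    rw [div_sub' hn'.ne', abs_div, abs_of_pos hn', div_le_div_iff_of_pos_right hn', abs_le]
    constructor <;> linarith

namespace Real

theorem sub_le_mul_log_div {a b : ℝ} (ha : 0 ≤ a) (hb : 0 < b) : a - b ≤ a * log (a / b) := by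
  have h := mul_nonneg hb.le (InformationTheory.klFun_nonneg (div_nonneg ha hb.le))
  rw [InformationTheory.klFun_apply, mul_sub, mul_add, ← mul_assoc, mul_div_cancel₀ _ hb.ne',
    mul_one] at h
  linarith

theorem monotoneOn_negMulLog : MonotoneOn negMulLog (Set.Icc 0 (exp (-1))) := by
  refine monotoneOn_of_deriv_nonneg (convex_Icc _ _) continuous_negMulLog.continuousOn
    (differentiableOn_negMulLog.mono fun x hx => ?_) fun x hx => ?_
  · rw [interior_Icc] at hx
    exact hx.1.ne'
  · rw [interior_Icc] at hx
    rw [deriv_negMulLog hx.1.ne']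
    have := (log_lt_log hx.1 hx.2).trans_eq (log_exp (-1))
    linarith

theorem negMulLog_add_le {a b : ℝ} (ha : 0 ≤ a) (hb : 0 ≤ b) :
    negMulLog (a + b) ≤ negMulLog a + negMulLog b := by
  have key : ∀ {u v : ℝ}, 0 ≤ u → 0 ≤ v → u * log u ≤ u * log (u + v) := fun {u v} hu hv => by
    rcases hu.eq_or_lt with h | h
    · simp [← h]
    · exact mul_le_mul_of_nonneg_left (log_le_log h (by linarith)) hu
  have h1 := key ha hb
  have h2 := key hb ha
  rw [add_comm b] at h2
  simp only [negMulLog, neg_mul]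
  linarith

theorem negMulLog_sub_negMulLog_add_le {p d : ℝ} (hp : 0 ≤ p) (hd : 0 < d)
    (hpd : d * (p + d) ≤ exp (-1)) : negMulLog p - negMulLog (p + d) ≤ negMulLog d := by
  have hlog : log d + log (p + d) ≤ -1 := by
    rw [← log_mul hd.ne' (by positivity), ← log_exp (-1)]
    exact log_le_log (by positivity) hpd
  have hp_log : p * log (p + d) - p * log p ≤ d := by
    have h := sub_le_mul_log_div hp (by positivity : 0 < p + d)
    rcases hp.eq_or_lt with h0 | h0
    · simp [← h0, hd.le]
    · rw [log_div h0.ne' (by positivity)] at h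
      linarith
  have := mul_le_mul_of_nonneg_left hlog hd.le
  simp only [negMulLog, neg_mul]
  nlinarith

theorem negMulLog_sub_le_negMulLog_abs_sub {p q : ℝ} (hp : 0 ≤ p) (hq : 0 ≤ q) (hp1 : p ≤ 1)
    (hpq : |p - q| ≤ exp (-1)) : negMulLog q - negMulLog p ≤ negMulLog |p - q| := by
  rcases le_or_gt p q with h | h
  · have := negMulLog_add_le hp (sub_nonneg.mpr h)
    rw [add_sub_cancel] at this
    rw [abs_sub_comm, abs_of_nonneg (sub_nonneg.mpr h)]
    linarith
  · have hd : 0 < p - q := sub_pos.mpr h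
    rw [abs_of_pos hd] at hpq ⊢
    have := negMulLog_sub_negMulLog_add_le hq hd <| by
      rw [add_sub_cancel]
      nlinarith
    rwa [add_sub_cancel] at this

theorem sum_negMulLog_le_card_mul {ι : Type*} [Fintype ι] [Nonempty ι] {δ : ι → ℝ}
    (hδ : ∀ i, 0 ≤ δ i) :
    ∑ i, negMulLog (δ i) ≤ Fintype.card ι * negMulLog ((∑ i, δ i) / Fintype.card ι) := by
  have hM : (0 : ℝ) < Fintype.card ι := by exact_mod_cast Fintype.card_pos
  have h := concaveOn_negMulLog.le_map_sum (t := univ) (w := fun _ => (Fintype.card ι : ℝ)⁻¹)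
    (p := δ) (fun _ _ => by positivity) (by simp [hM.ne']) (fun i _ => hδ i)
  simp only [smul_eq_mul, ← mul_sum] at h
  rwa [div_eq_inv_mul, ← inv_mul_le_iff₀ hM]

theorem sum_negMulLog_sub_sum_negMulLog_le {ι : Type*} [Fintype ι] [Nonempty ι] {p q : ι → ℝ}
    (hp : ∀ i, 0 ≤ p i) (hq : ∀ i, 0 ≤ q i) (hp1 : ∀ i, p i ≤ 1)
    (hpq : ∀ i, |p i - q i| ≤ exp (-1)) {ν : ℝ} (hν : 0 < ν)
    (hνM : ν / Fintype.card ι ≤ exp (-1)) (hsum : ∑ i, |p i - q i| ≤ ν) :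
    ∑ i, negMulLog (q i) - ∑ i, negMulLog (p i) ≤ ν * log (Fintype.card ι / ν) := by
  have hM : (0 : ℝ) < Fintype.card ι := by exact_mod_cast Fintype.card_pos
  have havg : (∑ i, |p i - q i|) / Fintype.card ι ≤ ν / Fintype.card ι :=
    div_le_div_of_nonneg_right hsum hM.le
  calc ∑ i, negMulLog (q i) - ∑ i, negMulLog (p i)
      = ∑ i, (negMulLog (q i) - negMulLog (p i)) := (sum_sub_distrib ..).symm
    _ ≤ ∑ i, negMulLog |p i - q i| := sum_le_sum fun i _ =>
      negMulLog_sub_le_negMulLog_abs_sub (hp i) (hq i) (hp1 i) (hpq i)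
    _ ≤ Fintype.card ι * negMulLog ((∑ i, |p i - q i|) / Fintype.card ι) :=
      sum_negMulLog_le_card_mul fun i => abs_nonneg _
    _ ≤ Fintype.card ι * negMulLog (ν / Fintype.card ι) := by
      gcongr
      exact monotoneOn_negMulLog ⟨by positivity, havg.trans hνM⟩ ⟨by positivity, hνM⟩ havg
    _ = ν * log (Fintype.card ι / ν) := by
      rw [negMulLog, log_div hν.ne' hM.ne', log_div hM.ne' hν.ne']
      field_simp
      ring

theorem one_div_eight_le_exp_neg_one : (1 : ℝ) / 8 ≤ exp (-1) := by
  rw [exp_neg, one_div]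
  exact inv_anti₀ (exp_pos 1) (by linarith [exp_one_lt_d9])

end Real

theorem IsDist.le_one {P : X × Y → ℝ} (hP : IsDist P) (z : X × Y) : P z ≤ 1 :=
  hP.2 ▸ single_le_sum (fun w _ => hP.1 w) (mem_univ z)

theorem IsPos.isDist {Q : X × Y → ℝ} (hQ : IsPos Q) : IsDist Q :=
  ⟨fun z => (hQ.1 z).le, hQ.2⟩

theorem relEnt_nonneg {P Q : X × Y → ℝ} (hP : IsDist P) (hQ : IsPos Q) : 0 ≤ relEnt P Q := by
  have h : ∑ z, (P z - Q z) ≤ relEnt P Q :=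
    sum_le_sum fun z _ => sub_le_mul_log_div (hP.1 z) (hQ.1 z)
  rwa [sum_sub_distrib, hP.2, hQ.2, sub_self] at h

theorem relEnt_eq_sum_sub_negMulLog {P Q : X × Y → ℝ} (hP : ∀ z, 0 ≤ P z) (hQ : ∀ z, 0 < Q z) :
    relEnt P Q = ∑ z, (P z * log (1 / Q z) - negMulLog (P z)) := by
  refine sum_congr rfl fun z _ => ?_
  rcases (hP z).eq_or_lt with h | h
  · simp [← h]
  · rw [log_div h.ne' (hQ z).ne', one_div, log_inv, negMulLog]
    ring

theorem relEnt_le_relEnt_add [Nonempty X] [Nonempty Y] {P P' Q : X × Y → ℝ} (hP : IsDist P)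
    (hP' : ∀ z, 0 ≤ P' z) (hQ : IsPos Q) {ν m : ℝ} (hν : 0 < ν)
    (hνM : ν / Fintype.card (X × Y) ≤ exp (-1)) (hclose : ∀ z, |P z - P' z| ≤ exp (-1))
    (hsum : ∑ z, |P z - P' z| ≤ ν) (hm : ∀ z, log (1 / Q z) ≤ m) :
    relEnt P Q ≤ relEnt P' Q + ν * log (Fintype.card (X × Y) / ν) + ν * m := by
  have hw : ∀ z, 0 ≤ log (1 / Q z) := fun z =>
    log_nonneg ((one_le_div (hQ.1 z)).mpr (hQ.isDist.le_one z))
  have hm0 : 0 ≤ m := (hw (Classical.arbitrary _)).trans (hm _)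
  have hcross : ∑ z, (P z - P' z) * log (1 / Q z) ≤ ν * m :=
    calc ∑ z, (P z - P' z) * log (1 / Q z) ≤ ∑ z, |P z - P' z| * m :=
          sum_le_sum fun z _ => (mul_le_mul_of_nonneg_right (le_abs_self _) (hw z)).trans
            (mul_le_mul_of_nonneg_left (hm z) (abs_nonneg _))
      _ = (∑ z, |P z - P' z|) * m := (sum_mul ..).symm
      _ ≤ ν * m := mul_le_mul_of_nonneg_right hsum hm0
  have hent := sum_negMulLog_sub_sum_negMulLog_le hP.1 hP' hP.le_one hclose hν hνM hsum
  have hsplit : relEnt P Q - relEnt P' Q = ∑ z, (P z - P' z) * log (1 / Q z) +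
      (∑ z, negMulLog (P' z) - ∑ z, negMulLog (P z)) := by
    rw [relEnt_eq_sum_sub_negMulLog hP.1 hQ.1, relEnt_eq_sum_sub_negMulLog hP' hQ.1]
    simp only [sum_sub_distrib, sub_mul]
    ring
  linarith

theorem En_le_relEnt {n : ℕ} {Pbar Pt Q : X × Y → ℝ} (hQ : IsPos Q) (hPt : IsTypeN n Pt)
    (hPtX : margX Pt = margX Pbar) (hPtY : margY Pt = margY Pbar) : En n Pbar Q ≤ relEnt Pt Q :=
  csInf_le ⟨0, by rintro _ ⟨P, hP, -, -, rfl⟩; exact relEnt_nonneg hP.1 hQ⟩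
    ⟨Pt, hPt, hPtX, hPtY, rfl⟩

theorem le_projE {P Q : X × Y → ℝ} (hP : IsDist P) {a : ℝ}
    (h : ∀ P', IsDist P' → margX P' = margX P → margY P' = margY P → a ≤ relEnt P' Q) :
    a ≤ projE P Q :=
  le_csInf ⟨_, P, hP, rfl, rfl, rfl⟩ fun _ ⟨P', hP', hP'X, hP'Y, hd⟩ => hd ▸ h P' hP' hP'X hP'Y

theorem En_le_relEnt_add [Nonempty X] [Nonempty Y] {n : ℕ} (hn : 0 < n) {Pbar P' Q : X × Y → ℝ}
    (hQ : IsPos Q) (hPbar : IsTypeN n Pbar) (hP' : IsDist P') (hP'X : margX P' = margX Pbar)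
    (hP'Y : margY P' = margY Pbar) {ν : ℝ} (hν : 0 < ν)
    (hMν : (Fintype.card (X × Y) : ℝ) / n ≤ ν) (hνM : ν / Fintype.card (X × Y) ≤ exp (-1)) :
    En n Pbar Q ≤ relEnt P' Q + ν * log (Fintype.card (X × Y) / ν) +
      ν * univ.sup' univ_nonempty fun z => log (1 / Q z) := by
  obtain ⟨Pt, hPt, hPtX, hPtY, hclose⟩ :=
    exists_isTypeN_margins_eq_abs_sub_le hn hP'.1 hPbar hP'X hP'Y
  have hn_inv : 1 / (n : ℝ) ≤ exp (-1) := by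
    refine le_trans ?_ hνM
    rwa [le_div_iff₀ (by exact_mod_cast Fintype.card_pos), one_div_mul_eq_div]
  have hsum : ∑ z, |Pt z - P' z| ≤ ν := by
    refine (sum_le_sum fun z _ => hclose z).trans ?_
    rwa [sum_const, card_univ, nsmul_eq_mul, mul_one_div]
  exact (En_le_relEnt hQ hPt hPtX hPtY).trans <|
    relEnt_le_relEnt_add hPt.1 hP'.1 hQ hν hνM (fun z => (hclose z).trans hn_inv) hsum
      fun z => le_sup' (fun z : X × Y => log (1 / Q z)) (mem_univ z)

/-- approximation of the projected relative entropy by its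
restriction to joint types. -/
theorem En_approximates_projE
    [Nonempty X] [Nonempty Y]
    (Q : X × Y → ℝ) (hQ : IsPos Q)
    (hX : 2 ≤ Fintype.card X) (hY : 2 ≤ Fintype.card Y)
    (n : ℕ) (hn : 1 ≤ n)
    (νn Δn : ℝ)
    (hν : νn = 4 * ((Fintype.card X : ℝ) - 1) * ((Fintype.card Y : ℝ) - 1) / (n : ℝ))
    (hΔ : Δn = νn * Real.log ((Fintype.card X : ℝ) * (Fintype.card Y : ℝ) / νn)
        + νn * (Finset.univ.sup' Finset.univ_nonempty
            (fun z : X × Y => Real.log (1 / Q z))))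
    (hν_half : νn ≤ 1 / 2) :
    ∀ Pbar : X × Y → ℝ, IsTypeN n Pbar → En n Pbar Q ≤ projE Pbar Q + Δn := by
  intro Pbar hPbar
  have hn' : (0 : ℝ) < n := by exact_mod_cast hn
  have hXR : (2 : ℝ) ≤ Fintype.card X := by exact_mod_cast hX
  have hYR : (2 : ℝ) ≤ Fintype.card Y := by exact_mod_cast hY
  have hM : (Fintype.card (X × Y) : ℝ) = Fintype.card X * Fintype.card Y := by
    push_cast [Fintype.card_prod]; rfl
  have hM4 : (4 : ℝ) ≤ Fintype.card (X × Y) := by rw [hM]; nlinarith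
  have hMν : (Fintype.card (X × Y) : ℝ) / n ≤ νn := by
    rw [hν, hM]
    exact div_le_div_of_nonneg_right (by nlinarith) hn'.le
  have hν0 : 0 < νn := (div_pos (by linarith) hn').trans_le hMν
  have hνM : νn / Fintype.card (X × Y) ≤ Real.exp (-1) := by
    have := div_le_div_of_nonneg_left hν0.le (by norm_num) hM4
    linarith [one_div_eight_le_exp_neg_one]
  rw [← sub_le_iff_le_add]
  refine le_projE hPbar.1 fun P' hP' hP'X hP'Y => ?_
  have := En_le_relEnt_add hn hQ hPbar hP' hP'X hP'Y hν0 hMν hνM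
  rw [hΔ, ← hM]
  linarith
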